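/- Let F be a field of characteristic 2, f ∈ F[X] a monic irreducible polynomial in one variable, and φ a nondefective quadratic form over F of dimension n. Suppose that f divides φ(ξ₁,…,ξₙ) for some ξ₁,…,ξₙ ∈ F[X], not all of them divisible by f. Then f ∈ D_{F(X)}^*(φ)^m for some m ≤ deg f. -/

import Mathlib

/-!
Background definitions for quadratic forms over fields of characteristic 2,
following the conventions of "Isotropy of quadratic forms over function fields
in characteristic 2".  A quadratic form of dimension `n` over a commutative ring
`R` is represented by a coefficient matrix `c : ι → ι → R` (`ι` a finite index
type), the associated quadratic map being `x ↦ ∑ i j, c i j * x i * x j`; every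
quadratic form on a finite-dimensional vector space (a map satisfying
`φ(av) = a²φ(v)` whose polar form is bilinear) arises this way.
-/

open scoped BigOperators Pointwise Classical

namespace QF2

variable {R S : Type*} [CommRing R] [CommRing S] {ι κ : Type} [Fintype ι] [Fintype κ]

/-- The value at `x` of the quadratic form with coefficient matrix `c`, namely
`∑ i j, c i j * x i * x j`. -/
def eval (c : ι → ι → R) (x : ι → R) : R := ∑ i, ∑ j, c i j * x i * x j

/-- The polar form `b(x,y) = q(x+y) - q(x) - q(y)` of the quadratic form `c`. -/
def polar (c : ι → ι → R) (x y : ι → R) : R := ∑ i, ∑ j, c i j * (x i * y j + x j * y i)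

/-- A quadratic form is isotropic if it vanishes on a nonzero vector. -/
def IsIsotropic (c : ι → ι → R) : Prop := ∃ x : ι → R, x ≠ 0 ∧ eval c x = 0

/-- Anisotropic: not isotropic. -/
abbrev IsAnisotropic (c : ι → ι → R) : Prop := ¬ IsIsotropic c

/-- Base change of a quadratic form along a ring homomorphism. -/
def map (σ : R →+* S) (c : ι → ι → R) : ι → ι → S := fun i j => σ (c i j)

/-- Quasilinear (totally singular): the polar form vanishes identically. -/
def IsQuasilinear (c : ι → ι → R) : Prop := ∀ x y : ι → R, polar c x y = 0

/-- Nondefective (quasilinear index `i_d = 0`): no nonzero vector of the radical of the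
polar form is isotropic. -/
def IsNondefective (c : ι → ι → R) : Prop :=
  ∀ x : ι → R, (∀ y, polar c x y = 0) → eval c x = 0 → x = 0

/-- `d` is isometric to `c`. -/
def Isometric (c : ι → ι → R) (d : κ → κ → R) : Prop :=
  ∃ g : (κ → R) ≃ₗ[R] (ι → R), ∀ x, eval d x = eval c (g x)

/-- `D_R^*(c)`: the set of nonzero represented elements. -/
def reps (c : ι → ι → R) : Set R := {a | a ≠ 0 ∧ ∃ x : ι → R, eval c x = a}

/-- `D_R^*(c)^m`: products of `m` nonzero represented elements. -/
def repsPow (c : ι → ι → R) (m : ℕ) : Set R :=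
  {a | ∃ v : Fin m → R, (∀ k, v k ∈ reps c) ∧ a = ∏ k, v k}

/-- The multiplicative subgroup of `F^*` generated by a set `s` of nonzero elements,
realized as a subset of `F` (products of elements of `s` and their inverses). -/
def genBy {F : Type*} [Field F] (s : Set F) : Set F :=
  ↑(Submonoid.closure (s ∪ Inv.inv '' s))

/-- `⟨D_F^*(c)⟩`: the subgroup generated by the nonzero represented elements. -/
def genGroup {F : Type*} [Field F] (c : ι → ι → F) : Set F := genBy (reps c)

/-- `⟨D_F^*(c)²⟩`. -/
def genGroup2 {F : Type*} [Field F] (c : ι → ι → F) : Set F := genBy (repsPow c 2)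

/-- The scaled quadratic form `a·c`. -/
def smulQF (a : R) (c : ι → ι → R) : ι → ι → R := fun i j => a * c i j

/-- Orthogonal sum of two quadratic forms. -/
def orthSum (c : ι → ι → R) (d : κ → κ → R) : (ι ⊕ κ) → (ι ⊕ κ) → R
  | Sum.inl i, Sum.inl j => c i j
  | Sum.inr i, Sum.inr j => d i j
  | _, _ => 0

lemma eval_add (c : ι → ι → R) (x y : ι → R) :
    eval c (x + y) = eval c x + eval c y + polar c x y := by
  unfold eval polar
  rw [← Finset.sum_add_distrib, ← Finset.sum_add_distrib]
  refine Finset.sum_congr rfl fun i _ => ?_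
  rw [← Finset.sum_add_distrib, ← Finset.sum_add_distrib]
  refine Finset.sum_congr rfl fun j _ => ?_
  simp only [Pi.add_apply]; ring

lemma polar_add_left (c : ι → ι → R) (x x' y : ι → R) :
    polar c (x + x') y = polar c x y + polar c x' y := by
  unfold polar
  rw [← Finset.sum_add_distrib]
  refine Finset.sum_congr rfl fun i _ => ?_
  rw [← Finset.sum_add_distrib]
  refine Finset.sum_congr rfl fun j _ => ?_
  simp only [Pi.add_apply]; ring

lemma polar_smul_left (c : ι → ι → R) (a : R) (x y : ι → R) :
    polar c (a • x) y = a * polar c x y := by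
  unfold polar
  rw [Finset.mul_sum]
  refine Finset.sum_congr rfl fun i _ => ?_
  rw [Finset.mul_sum]
  refine Finset.sum_congr rfl fun j _ => ?_
  simp only [Pi.smul_apply, smul_eq_mul]; ring

lemma eval_smul (c : ι → ι → R) (a : R) (x : ι → R) :
    eval c (a • x) = a ^ 2 * eval c x := by
  unfold eval
  rw [Finset.mul_sum]
  refine Finset.sum_congr rfl fun i _ => ?_
  rw [Finset.mul_sum]
  refine Finset.sum_congr rfl fun j _ => ?_
  simp only [Pi.smul_apply, smul_eq_mul]; ring

/-- The defect of a quadratic form: the submodule of isotropic vectors lying in the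
radical of the polar form. -/
def defectSubmodule (c : ι → ι → R) : Submodule R (ι → R) where
  carrier := {x | (∀ y, polar c x y = 0) ∧ eval c x = 0}
  zero_mem' := by
    constructor
    · intro y; unfold polar; simp
    · unfold eval; simp
  add_mem' := by
    rintro x x' ⟨hx1, hx2⟩ ⟨hx1', hx2'⟩
    refine ⟨fun y => ?_, ?_⟩
    · rw [polar_add_left, hx1 y, hx1' y, add_zero]
    · rw [eval_add, hx2, hx2', hx1 x', add_zero, add_zero]
  smul_mem' := by
    rintro a x ⟨hx1, hx2⟩
    refine ⟨fun y => ?_, ?_⟩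
    · rw [polar_smul_left, hx1 y, mul_zero]
    · rw [eval_smul, hx2, mul_zero]

/-- The quasilinear index (defect) `i_d` of a quadratic form. -/
noncomputable def defectIndex (c : ι → ι → R) : ℕ :=
  Module.finrank R (defectSubmodule c)

/-- The total isotropy index `i_t`: the dimension of a maximal totally isotropic
subspace. -/
noncomputable def totalIndex (c : ι → ι → R) : ℕ :=
  sSup {m | ∃ W : Submodule R (ι → R), (∀ x ∈ W, eval c x = 0) ∧ Module.finrank R W = m}

/-- The Witt index `i_W = i_t - i_d`. -/
noncomputable def wittIndex (c : ι → ι → R) : ℕ := totalIndex c - defectIndex c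

variable {F : Type u} [Field F]

/-- The homogeneous quadratic polynomial `φ(X_1, …, X_n)` attached to a quadratic form. -/
noncomputable def poly (c : ι → ι → F) : MvPolynomial ι F :=
  ∑ i, ∑ j, MvPolynomial.C (c i j) * (MvPolynomial.X i * MvPolynomial.X j)

/-- The canonical map from `F` to the total fraction ring of `A/(f)`; when `f` is
irreducible, the target is the function field `F(f)`. -/
noncomputable def ffHom {A : Type*} [CommRing A] (σ : F →+* A) (f : A) :
    F →+* FractionRing (A ⧸ Ideal.span {f}) :=
  (algebraMap (A ⧸ Ideal.span {f}) (FractionRing (A ⧸ Ideal.span {f}))).comp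
    ((Ideal.Quotient.mk (Ideal.span {f})).comp σ)

/-- The canonical map from `R` into (the total fraction ring of) `R[X_i : i ∈ κ]`;
for a field this is the inclusion into the rational function field `F(X_i : i ∈ κ)`. -/
noncomputable def ratHom (κ : Type) (R : Type*) [CommRing R] :
    R →+* FractionRing (MvPolynomial κ R) :=
  (algebraMap (MvPolynomial κ R) (FractionRing (MvPolynomial κ R))).comp MvPolynomial.C

/-- The canonical map from `F` into the rational function field `F(X)`. -/
noncomputable def ratHom1 (F : Type u) [Field F] : F →+* FractionRing (Polynomial F) :=
  (algebraMap (Polynomial F) (FractionRing (Polynomial F))).comp Polynomial.C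

/-- `φ_{F(ψ)}` is isotropic, where `F(ψ)` is the function field of the quadratic form `ψ`.
When the polynomial of `ψ` is irreducible this is the quotient field of `F[X]/(ψ(X))`;
otherwise (`ψ ≅ ⟨a⟩`, `ψ ≅ ℍ`, or degenerate defective cases) `F(ψ)` is a purely
transcendental extension of `F`, over which isotropy is equivalent to isotropy over `F`. -/
def IsotropicOverFunField (c : ι → ι → F) (d : κ → κ → F) : Prop :=
  (Irreducible (poly d) → IsIsotropic (map (ffHom MvPolynomial.C (poly d)) c)) ∧
  (¬ Irreducible (poly d) → IsIsotropic c)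

/-- Stable birational equivalence of (nondefective) quadratic forms:
`φ_{F(ψ)}` and `ψ_{F(φ)}` are both isotropic. -/
def StbEquiv (c : ι → ι → F) (d : κ → κ → F) : Prop :=
  IsotropicOverFunField c d ∧ IsotropicOverFunField d c

/-- The leading coefficient of a multivariate polynomial with respect to the
lexicographic ordering on monomials. -/
noncomputable def lexLC {l : ℕ} {F : Type*} [CommSemiring F] (f : MvPolynomial (Fin l) F) : F :=
  if h : f = 0 then 0
  else f.coeff (ofLex ((f.support.image (toLex : (Fin l →₀ ℕ) → Lex (Fin l →₀ ℕ))).max'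
    (Finset.Nonempty.image (MvPolynomial.support_nonempty.mpr h) _)))

/-- The coefficient matrix of the tensor product `π ⊗ φ` of the bilinear Pfister form
`π = ⟨⟨a 1, …, a n⟩⟩_b` with the quadratic form `c` (with respect to the standard basis,
`π ⊗ φ ≅ ⊥_{S ⊆ {1,…,n}} (∏_{i ∈ S} a i) φ`). -/
def pfisterMul {n : ℕ} (a : Fin n → R) (c : ι → ι → R) :
    ((Fin n → Bool) × ι) → ((Fin n → Bool) × ι) → R :=
  fun p q =>
    if p.1 = q.1 then (∏ i, if p.1 i then a i else 1) * c p.2 q.2 else 0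

/-!
If `φ` is isotropic, say `φ(v) = 0` with `v ≠ 0`, nondefectiveness gives `y` with
`b(v, y) ≠ 0`, and `t ↦ φ(t v + y) = t b(v, y) + φ(y)` takes every value: `f` is itself
represented.

If `φ` is anisotropic we induct on `deg f`. Reducing the `ξᵢ` modulo `f` and dividing out
their gcd, we may assume `deg ξᵢ < deg f` and that the `ξᵢ` are coprime. Anisotropy forces
`deg φ(ξ) = 2 maxᵢ deg ξᵢ`, so `φ(ξ) = f g` with `deg g ≤ deg f - 2`. Now
`f = φ(ξ / g) · lc(g) · ∏ p` over the monic irreducible factors `p` of `g`. Here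
`lc(g) = lc(φ(ξ))` is a value of `φ`, and every `p` divides `φ(ξ)` but not all `ξᵢ`, so by
induction it is a product of at most `deg p` values. This gives at most
`2 + deg g ≤ deg f` factors.
-/

open scoped Polynomial

def repsPowLE (c : ι → ι → R) (n : ℕ) : Set R := {a | ∃ m ≤ n, a ∈ repsPow c m}

section Reps

variable {c : ι → ι → R}

lemma mem_repsPowLE_of_mem_reps {a : R} {n : ℕ} (ha : a ∈ reps c) (hn : 1 ≤ n) :
    a ∈ repsPowLE c n :=
  ⟨1, hn, fun _ => a, fun _ => ha, by simp⟩

lemma repsPowLE_mono {m n : ℕ} (h : m ≤ n) : repsPowLE c m ⊆ repsPowLE c n :=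
  fun _ ⟨k, hk, ha⟩ => ⟨k, hk.trans h, ha⟩

lemma mul_mem_repsPow {a b : R} {m n : ℕ} (ha : a ∈ repsPow c m) (hb : b ∈ repsPow c n) :
    a * b ∈ repsPow c (m + n) := by
  obtain ⟨v, hv, rfl⟩ := ha
  obtain ⟨w, hw, rfl⟩ := hb
  refine ⟨Fin.append v w, fun k => ?_, by simp [Fin.prod_univ_add]⟩
  refine Fin.addCases (fun i => ?_) (fun i => ?_) k
  · simpa only [Fin.append_left] using hv i
  · simpa only [Fin.append_right] using hw i

lemma mul_mem_repsPowLE {a b : R} {m n : ℕ} (ha : a ∈ repsPowLE c m)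
    (hb : b ∈ repsPowLE c n) : a * b ∈ repsPowLE c (m + n) := by
  obtain ⟨k, hk, ha⟩ := ha
  obtain ⟨l, hl, hb⟩ := hb
  exact ⟨k + l, by omega, mul_mem_repsPow ha hb⟩

lemma multiset_prod_map_mem_repsPowLE {α : Type*} (s : Multiset α) (g : α → R) (w : α → ℕ)
    (h : ∀ p ∈ s, g p ∈ repsPowLE c (w p)) : (s.map g).prod ∈ repsPowLE c (s.map w).sum := by
  induction s using Multiset.induction_on with
  | empty => exact ⟨0, le_rfl, Fin.elim0, fun k => k.elim0, by simp⟩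
  | cons p s ih =>
    rw [Multiset.map_cons, Multiset.map_cons, Multiset.prod_cons, Multiset.sum_cons]
    exact mul_mem_repsPowLE (h p (Multiset.mem_cons_self p s))
      (ih fun q hq => h q (Multiset.mem_cons_of_mem hq))

end Reps

lemma eval_map (σ : R →+* S) (c : ι → ι → R) (x : ι → R) :
    eval (map σ c) (σ ∘ x) = σ (eval c x) := by
  simp [eval, map, map_sum]

lemma polar_map (σ : R →+* S) (c : ι → ι → R) (x y : ι → R) :
    polar (map σ c) (σ ∘ x) (σ ∘ y) = σ (polar c x y) := by
  simp [polar, map, map_sum]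

lemma dvd_eval_sub_eval (c : ι → ι → R) {a : R} {x y : ι → R} (h : ∀ i, a ∣ x i - y i) :
    a ∣ eval c x - eval c y := by
  unfold eval
  rw [← Finset.sum_sub_distrib]
  refine Finset.dvd_sum fun i _ => ?_
  rw [← Finset.sum_sub_distrib]
  refine Finset.dvd_sum fun j _ => ?_
  rw [show c i j * x i * x j - c i j * y i * y j
      = c i j * ((x i - y i) * x j + y i * (x j - y j)) by ring]
  exact dvd_mul_of_dvd_right (dvd_add (dvd_mul_of_dvd_left (h i) _)
    (dvd_mul_of_dvd_right (h j) _)) _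

theorem IsNondefective.mem_reps_map_of_isIsotropic {K : Type*} [Field K] {c : ι → ι → F}
    (hnd : IsNondefective c) (hiso : IsIsotropic c) (σ : F →+* K) {a : K} (ha : a ≠ 0) :
    a ∈ reps (map σ c) := by
  obtain ⟨v, hv0, hv⟩ := hiso
  obtain ⟨y, hy⟩ : ∃ y, polar c v y ≠ 0 := by
    by_contra! h
    exact hv0 (hnd v h hv)
  have hy' : σ (polar c v y) ≠ 0 := (map_ne_zero σ).mpr hy
  refine ⟨ha, ((a - σ (eval c y)) / σ (polar c v y)) • (σ ∘ v) + σ ∘ y, ?_⟩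
  rw [eval_add, eval_smul, polar_smul_left, eval_map, eval_map, polar_map, hv, map_zero,
    mul_zero, zero_add, div_mul_cancel₀ _ hy']
  ring

section Polynomial

def supNatDegree (ξ : ι → R[X]) : ℕ := Finset.univ.sup fun i => (ξ i).natDegree

lemma natDegree_le_supNatDegree (ξ : ι → R[X]) (i : ι) : (ξ i).natDegree ≤ supNatDegree ξ :=
  Finset.le_sup (f := fun i => (ξ i).natDegree) (Finset.mem_univ i)

lemma coeff_eval_map_C (c : ι → ι → R) {ξ : ι → R[X]} {d : ℕ}
    (hd : ∀ i, (ξ i).natDegree ≤ d) :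
    (eval (map Polynomial.C c) ξ).coeff (d + d) = eval c fun i => (ξ i).coeff d := by
  simp only [eval, map, Polynomial.finsetSum_coeff]
  refine Finset.sum_congr rfl fun i _ => Finset.sum_congr rfl fun j _ => ?_
  rw [mul_assoc, Polynomial.coeff_C_mul,
    Polynomial.coeff_mul_add_eq_of_natDegree_le (hd i) (hd j), mul_assoc]

lemma natDegree_eval_map_C_le (c : ι → ι → R) {ξ : ι → R[X]} {d : ℕ}
    (hd : ∀ i, (ξ i).natDegree ≤ d) : (eval (map Polynomial.C c) ξ).natDegree ≤ d + d := by
  refine Polynomial.natDegree_sum_le_of_forall_le _ _ fun i _ =>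
    Polynomial.natDegree_sum_le_of_forall_le _ _ fun j _ => ?_
  refine Polynomial.natDegree_mul_le_of_le ?_ (hd j)
  exact (Polynomial.natDegree_C_mul_le _ _).trans (hd i)

lemma exists_coeff_sup_natDegree_ne_zero {ξ : ι → R[X]} (hξ : ξ ≠ 0) :
    ∃ i, (ξ i).coeff (supNatDegree ξ) ≠ 0 := by
  obtain ⟨j, hj⟩ := Function.ne_iff.mp hξ
  obtain ⟨i, -, hi⟩ : ∃ i ∈ Finset.univ, supNatDegree ξ = (ξ i).natDegree :=
    Finset.exists_mem_eq_sup Finset.univ ⟨j, Finset.mem_univ j⟩ fun i => (ξ i).natDegree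
  rw [hi]
  by_cases hξi : ξ i = 0
  · -- then all `ξ` are constants, and `ξ j` is a nonzero one
    have hj0 := natDegree_le_supNatDegree ξ j
    rw [hi, hξi, Polynomial.natDegree_zero, Nat.le_zero] at hj0
    refine ⟨j, ?_⟩
    rw [hξi, Polynomial.natDegree_zero, ← hj0, Polynomial.coeff_natDegree]
    exact Polynomial.leadingCoeff_ne_zero.mpr hj
  · exact ⟨i, by rwa [Polynomial.coeff_natDegree, Polynomial.leadingCoeff_ne_zero]⟩

variable {c : ι → ι → F} {ξ : ι → F[X]}

lemma IsAnisotropic.coeff_eval_map_C_ne_zero (hc : IsAnisotropic c) (hξ : ξ ≠ 0) :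
    (eval (map Polynomial.C c) ξ).coeff (supNatDegree ξ + supNatDegree ξ) ≠ 0 := by
  rw [coeff_eval_map_C c (natDegree_le_supNatDegree ξ)]
  obtain ⟨i, hi⟩ := exists_coeff_sup_natDegree_ne_zero hξ
  exact fun h => hc ⟨_, Function.ne_iff.mpr ⟨i, hi⟩, h⟩

lemma IsAnisotropic.natDegree_eval_map_C (hc : IsAnisotropic c) (hξ : ξ ≠ 0) :
    (eval (map Polynomial.C c) ξ).natDegree = supNatDegree ξ + supNatDegree ξ :=
  le_antisymm (natDegree_eval_map_C_le c (natDegree_le_supNatDegree ξ))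
    (Polynomial.le_natDegree_of_ne_zero (hc.coeff_eval_map_C_ne_zero hξ))

lemma IsAnisotropic.leadingCoeff_eval_map_C_mem_reps (hc : IsAnisotropic c) (hξ : ξ ≠ 0) :
    (eval (map Polynomial.C c) ξ).leadingCoeff ∈ reps c := by
  refine ⟨?_, fun i => (ξ i).coeff (supNatDegree ξ), ?_⟩
  · rw [Polynomial.leadingCoeff, hc.natDegree_eval_map_C hξ]
    exact hc.coeff_eval_map_C_ne_zero hξ
  · rw [Polynomial.leadingCoeff, hc.natDegree_eval_map_C hξ,
      coeff_eval_map_C c (natDegree_le_supNatDegree ξ)]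

lemma exists_reduced_of_dvd_eval (c : ι → ι → F) {f : F[X]} (hf : f.Monic)
    (hirr : Irreducible f) (hdvd : f ∣ eval (map Polynomial.C c) ξ) (hnot : ¬ ∀ i, f ∣ ξ i) :
    ∃ η : ι → F[X], f ∣ eval (map Polynomial.C c) η ∧
      (∀ i, (η i).natDegree < f.natDegree) ∧ Finset.univ.gcd η = 1 := by
  obtain ⟨ρ, hρ⟩ : ∃ ρ : ι → F[X], ∀ i, ρ i = ξ i %ₘ f := ⟨_, fun _ => rfl⟩
  have hξρ : ∀ i, f ∣ ξ i - ρ i := fun i =>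
    ⟨ξ i /ₘ f, by rw [hρ, Polynomial.modByMonic_eq_sub_mul_div]; ring⟩
  have hdvdρ : f ∣ eval (map Polynomial.C c) ρ :=
    (dvd_sub_right hdvd).mp (dvd_eval_sub_eval _ hξρ)
  have hnotρ : ¬ ∀ i, f ∣ ρ i := fun h =>
    hnot fun i => by simpa using dvd_add (hξρ i) (h i)
  obtain ⟨i₀, -⟩ := not_forall.mp hnot
  obtain ⟨η, hρη, hgcd⟩ := Finset.extract_gcd ρ ⟨i₀, Finset.mem_univ i₀⟩
  set d := Finset.univ.gcd ρ
  have hfd : ¬ f ∣ d := fun h => hnotρ fun i => h.trans (Finset.gcd_dvd (Finset.mem_univ i))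
  have hd : d ≠ 0 := fun h => hfd (h ▸ dvd_zero f)
  refine ⟨η, ?_, fun i => ?_, hgcd⟩
  · rw [show ρ = d • η from funext fun i => hρη i (Finset.mem_univ i), eval_smul] at hdvdρ
    exact (hirr.prime.dvd_or_dvd hdvdρ).resolve_left fun h => hfd (hirr.prime.dvd_of_dvd_pow h)
  · calc (η i).natDegree ≤ (ρ i).natDegree := by
          by_cases hη : η i = 0
          · simp [hη]
          · rw [hρη i (Finset.mem_univ i), Polynomial.natDegree_mul hd hη]
            omega
      _ < f.natDegree := hρ i ▸ Polynomial.natDegree_modByMonic_lt _ hf hirr.ne_one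

lemma map_ratHom1 {α : Type} (c : α → α → F) :
    map (ratHom1 F) c = map (algebraMap F[X] (FractionRing F[X])) (map Polynomial.C c) :=
  rfl

open UniqueFactorizationMonoid in
lemma IsAnisotropic.algebraMap_mem_repsPowLE_of_eval_eq_mul (hc : IsAnisotropic c)
    {f g : F[X]} (hf : f.Monic) (hξ : ξ ≠ 0) (heq : eval (map Polynomial.C c) ξ = f * g)
    (hfactors : ∀ p ∈ normalizedFactors g, algebraMap F[X] (FractionRing F[X]) p ∈
      repsPowLE (map (ratHom1 F) c) p.natDegree) :
    algebraMap F[X] (FractionRing F[X]) f ∈ repsPowLE (map (ratHom1 F) c) (g.natDegree + 2) := by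
  set e := algebraMap F[X] (FractionRing F[X])
  have he : ∀ {p : F[X]}, p ≠ 0 → e p ≠ 0 := fun hp =>
    (map_ne_zero_iff e (IsFractionRing.injective _ _)).mpr hp
  have hlc := hc.leadingCoeff_eval_map_C_mem_reps hξ
  rw [heq, Polynomial.leadingCoeff_mul, hf.leadingCoeff, one_mul] at hlc
  have hg : g ≠ 0 := Polynomial.leadingCoeff_ne_zero.mp hlc.1
  have hquot : e f / e g ∈ reps (map (ratHom1 F) c) := by
    refine ⟨div_ne_zero (he hf.ne_zero) (he hg), (e g)⁻¹ • (e ∘ ξ), ?_⟩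
    have := he hg
    rw [eval_smul, map_ratHom1, eval_map, heq, map_mul]
    field_simp
    exact mul_comm _ _
  have hlc' : e (Polynomial.C g.leadingCoeff) ∈ reps (map (ratHom1 F) c) := by
    obtain ⟨hne, v, hv⟩ := hlc
    refine ⟨he (Polynomial.C_ne_zero.mpr hne), ratHom1 F ∘ v, ?_⟩
    rw [eval_map, hv]
    rfl
  have hmonic : ∀ p ∈ normalizedFactors g, p.Monic := fun p hp =>
    ((Polynomial.mem_normalizedFactors_iff hg).mp hp).2.1
  have hprod : e (normalizedFactors g).prod ∈ repsPowLE (map (ratHom1 F) c) g.natDegree := by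
    have := multiset_prod_map_mem_repsPowLE _ e _ hfactors
    rwa [← map_multiset_prod, ← Polynomial.natDegree_multiset_prod_of_monic _ hmonic,
      ← Polynomial.natDegree_C_mul (Polynomial.leadingCoeff_ne_zero.mpr hg),
      Polynomial.leadingCoeff_mul_prod_normalizedFactors] at this
  have hsplit : e f = e f / e g * (e (Polynomial.C g.leadingCoeff) *
      e (normalizedFactors g).prod) := by
    rw [← map_mul, Polynomial.leadingCoeff_mul_prod_normalizedFactors, div_mul_cancel₀ _ (he hg)]
  rw [hsplit]
  exact repsPowLE_mono (by omega) (mul_mem_repsPowLE (mem_repsPowLE_of_mem_reps hquot le_rfl)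
    (mul_mem_repsPowLE (mem_repsPowLE_of_mem_reps hlc' le_rfl) hprod))

theorem IsAnisotropic.algebraMap_mem_repsPowLE_of_dvd_eval (hc : IsAnisotropic c) {f : F[X]}
    (hf : f.Monic) (hirr : Irreducible f) (hdvd : f ∣ eval (map Polynomial.C c) ξ)
    (hnot : ¬ ∀ i, f ∣ ξ i) :
    algebraMap F[X] (FractionRing F[X]) f ∈ repsPowLE (map (ratHom1 F) c) f.natDegree := by
  induction hn : f.natDegree using Nat.strong_induction_on generalizing f ξ with
  | _ n ih =>
  subst hn
  obtain ⟨η, ⟨g, heq⟩, hdeg, hgcd⟩ := exists_reduced_of_dvd_eval c hf hirr hdvd hnot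
  have hη : η ≠ 0 := by
    rintro rfl
    have hgcd0 : Finset.univ.gcd (0 : ι → F[X]) = 0 := Finset.gcd_eq_zero_iff.mpr fun _ _ => rfl
    exact zero_ne_one (hgcd0.symm.trans hgcd)
  have hg : g ≠ 0 := by
    rintro rfl
    exact Polynomial.leadingCoeff_ne_zero.mp (hc.leadingCoeff_eval_map_C_mem_reps hη).1
      (by rw [heq, mul_zero])
  have hdeg_g : g.natDegree + 2 ≤ f.natDegree := by
    have hsum := hc.natDegree_eval_map_C hη
    have hsup : supNatDegree η < f.natDegree :=
      (Finset.sup_lt_iff hirr.natDegree_pos).mpr fun i _ => hdeg i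
    rw [heq, Polynomial.natDegree_mul hf.ne_zero hg] at hsum
    omega
  refine repsPowLE_mono hdeg_g (hc.algebraMap_mem_repsPowLE_of_eval_eq_mul hf hη heq
    fun p hp => ?_)
  obtain ⟨hpirr, hpmonic, hpg⟩ := (Polynomial.mem_normalizedFactors_iff hg).mp hp
  refine ih _ ?_ hpmonic hpirr (heq ▸ dvd_mul_of_dvd_right hpg f) (fun h => ?_) rfl
  · have := Polynomial.natDegree_le_of_dvd hpg hg
    omega
  · exact hpirr.not_isUnit (isUnit_of_dvd_one (hgcd ▸ Finset.dvd_gcd_iff.mpr fun i _ => h i))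

end Polynomial

theorem stmt7_general {F : Type u} [Field F] {ι : Type} [Fintype ι]
    (c : ι → ι → F) (hnd : IsNondefective c)
    (f : Polynomial F) (hmonic : f.Monic) (hirr : Irreducible f)
    (ξ : ι → Polynomial F)
    (hdvd : f ∣ eval (map (Polynomial.C : F →+* Polynomial F) c) ξ)
    (hnotall : ¬ ∀ i, f ∣ ξ i) :
    ∃ m ≤ f.natDegree,
      algebraMap (Polynomial F) (FractionRing (Polynomial F)) f
        ∈ repsPow (map (ratHom1 F) c) m := by
  by_cases hiso : IsIsotropic c
  · have hf : algebraMap (Polynomial F) (FractionRing (Polynomial F)) f ≠ 0 :=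
      (map_ne_zero_iff _ (IsFractionRing.injective _ _)).mpr hmonic.ne_zero
    exact mem_repsPowLE_of_mem_reps (hnd.mem_reps_map_of_isIsotropic hiso _ hf)
      hirr.natDegree_pos
  · exact IsAnisotropic.algebraMap_mem_repsPowLE_of_dvd_eval hiso hmonic hirr hdvd hnotall

/-- Let `F` be a field of characteristic 2, `f ∈ F[X]` a monic
irreducible polynomial in one variable, and `φ` a nondefective quadratic form over `F`.
Suppose `f` divides `φ(ξ₁,…,ξₙ)` for some `ξᵢ ∈ F[X]` not all divisible by `f`.
Then `f ∈ D^*_{F(X)}(φ)^m` for some `m ≤ deg f`. -/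
theorem stmt7 {F : Type u} [Field F] [CharP F 2] {ι : Type} [Fintype ι]
    (c : ι → ι → F) (hnd : IsNondefective c)
    (f : Polynomial F) (hmonic : f.Monic) (hirr : Irreducible f)
    (ξ : ι → Polynomial F)
    (hdvd : f ∣ eval (map (Polynomial.C : F →+* Polynomial F) c) ξ)
    (hnotall : ¬ ∀ i, f ∣ ξ i) :
    ∃ m ≤ f.natDegree,
      algebraMap (Polynomial F) (FractionRing (Polynomial F)) f
        ∈ repsPow (map (ratHom1 F) c) m :=
  stmt7_general c hnd f hmonic hirr ξ hdvd hnotall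

end QF2
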